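/- arXiv:1205.2535 — 7 statements merged into one kernel-verified Lean document; each statement's English description precedes it below -/
import Mathlib

section
/- Let G be a finite simple graph and let ≺ be a linear ordering of its vertices satisfying the LexBFS property: for all vertices a, b, c with c ≺ b ≺ a, c adjacent to a, and c not adjacent to b, there exists a vertex d with d ≺ c, d adjacent to b, and d not adjacent to a. Let z be the last vertex in the ordering. Then for all vertices a, b, c with c ≺ b ≺ a and c adjacent to a, there exists a path in G from b to c all of whose internal vertices lie outside the closed neighborhood N[z] of z. -/
/-!
Induction on `c`. If `c ~ b` the edge is the path. Otherwise the LexBFS property yields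
`d ≺ c` with `d ~ b`, `d ≁ a`. If `d ∉ N[z]`, the induction hypothesis for `d ≺ c ≺ b` joins
`c` to `d`, and `b ~ d` closes the path. If `d ∈ N[z]`, then `d ~ z` while `d ≁ a`, so `a ≺ z`
and the LexBFS property for `d ≺ a ≺ z` yields `e ≺ d` with `e ~ a`, `e ∉ N[z]`; the induction
hypothesis for `e` joins both `b` and `c` to `e`.
-/

namespace SimpleGraph

variable {V : Type*} (G : SimpleGraph V)

/-- The Brandstädt–Dragan–Nicolai characterisation of LexBFS orderings. -/
def IsLexBFSOrder [LinearOrder V] : Prop :=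
  ∀ a b c : V, c < b → b < a → G.Adj c a → ¬ G.Adj c b →
    ∃ d : V, d < c ∧ G.Adj d b ∧ ¬ G.Adj d a

def JoinedOutside (S : Set V) (u v : V) : Prop :=
  ∃ p : G.Walk u v, ∀ w ∈ p.support, w ≠ u → w ≠ v → w ∉ S

variable {G} {S : Set V} {u v w : V}

theorem Adj.joinedOutside (h : G.Adj u v) : G.JoinedOutside S u v :=
  ⟨.cons h .nil, by simp +contextual [or_imp]⟩

namespace JoinedOutside

theorem symm (h : G.JoinedOutside S u v) : G.JoinedOutside S v u := by
  obtain ⟨p, hp⟩ := h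
  exact ⟨p.reverse, fun x hx hxv hxu => hp x (by simpa using hx) hxu hxv⟩

theorem trans (huv : G.JoinedOutside S u v) (hvw : G.JoinedOutside S v w) (hv : v ∉ S) :
    G.JoinedOutside S u w := by
  obtain ⟨p, hp⟩ := huv
  obtain ⟨q, hq⟩ := hvw
  refine ⟨p.append q, fun x hx hxu hxw => ?_⟩
  obtain rfl | hxv := eq_or_ne x v
  · exact hv
  rcases (p.mem_support_append_iff q).mp hx with hx | hx
  exacts [hp x hx hxu hxv, hq x hx hxv hxw]

theorem exists_isPath [DecidableEq V] (h : G.JoinedOutside S u v) :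
    ∃ p : G.Walk u v, p.IsPath ∧ ∀ w ∈ p.support, w ≠ u → w ≠ v → w ∉ S := by
  obtain ⟨p, hp⟩ := h
  exact ⟨p.bypass, p.bypass_isPath, fun x hx => hp x (p.support_bypass_subset_support hx)⟩

end JoinedOutside

namespace IsLexBFSOrder

variable [LinearOrder V] {z : V}

theorem exists_lt_adj_notMem_closedNbhd (hlex : G.IsLexBFSOrder) (hz : ∀ w, w ≤ z)
    {a d : V} (hda : d < a) (hzd : G.Adj z d) (hnda : ¬ G.Adj d a) :
    ∃ e, e < d ∧ G.Adj e a ∧ e ∉ insert z (G.neighborSet z) := by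
  have haz : a < z := (hz a).lt_of_ne (by rintro rfl; exact hnda hzd.symm)
  obtain ⟨e, hed, hea, hnez⟩ := hlex z a d hda haz hzd.symm hnda
  refine ⟨e, hed, hea, ?_⟩
  rintro (rfl | hze)
  exacts [(hed.trans (hda.trans haz)).false, hnez hze.symm]

theorem joinedOutside_closedNbhd [WellFoundedLT V] (hlex : G.IsLexBFSOrder)
    (hz : ∀ w, w ≤ z) {a b c : V} (hcb : c < b) (hba : b < a) (hca : G.Adj c a) :
    G.JoinedOutside (insert z (G.neighborSet z)) b c := by
  induction c using WellFoundedLT.induction generalizing a b with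
  | _ c ih =>
  by_cases hcb' : G.Adj c b
  · exact hcb'.symm.joinedOutside
  obtain ⟨d, hdc, hdb, hnda⟩ := hlex a b c hcb hba hca hcb'
  by_cases hzd : G.Adj z d
  · obtain ⟨e, hed, hea, he⟩ :=
      hlex.exists_lt_adj_notMem_closedNbhd hz (hdc.trans (hcb.trans hba)) hzd hnda
    have hec := hed.trans hdc
    exact (ih e hec (hec.trans hcb) hba hea).trans
      (ih e hec hec (hcb.trans hba) hea).symm he
  · have hd : d ∉ insert z (G.neighborSet z) := by
      rintro (rfl | hzd')
      exacts [(hz a).not_gt (hdc.trans (hcb.trans hba)), hzd hzd']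
    exact hdb.symm.joinedOutside.trans (ih d hdc hdc hcb hdb).symm hd

end IsLexBFSOrder

end SimpleGraph

/-- In a finite simple graph with a LexBFS ordering (given by a linear
order on the vertices satisfying the Brandstädt–Dragan–Nicolai exchange property),
with last vertex `z`, for all vertices `c ≺ b ≺ a` with `c` adjacent to `a`, there is
a path from `b` to `c` whose internal vertices all lie outside `N[z]`. -/
theorem stmt_0 {V : Type*} [Fintype V] [LinearOrder V] (G : SimpleGraph V)
    (hlex : ∀ a b c : V, c < b → b < a → G.Adj c a → ¬ G.Adj c b →
      ∃ d : V, d < c ∧ G.Adj d b ∧ ¬ G.Adj d a)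
    (z : V) (hz : ∀ w : V, w ≤ z) :
    ∀ a b c : V, c < b → b < a → G.Adj c a →
      ∃ p : G.Walk b c, p.IsPath ∧
        ∀ w ∈ p.support, w ≠ b → w ≠ c → ¬ (w = z ∨ G.Adj z w) := by
  intro a b c hcb hba hca
  classical
  exact (SimpleGraph.IsLexBFSOrder.joinedOutside_closedNbhd hlex hz hcb hba hca).exists_isPath
end

section
/- Let G be a finite simple non-complete graph satisfying the LexBFS property ordering, with last vertex z, and suppose every neighbor x of z satisfies N(x) ⊆ N[z]. Then for any two neighbors x, y of z, x and y are adjacent; consequently N[x] = N[z] for every neighbor x of z. -/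
/-!
Let `x ≺ y` be neighbours of the last vertex `z` with `xy ∉ E`. The LexBFS condition applied to
`x ≺ y ≺ z` yields `d ≺ x` adjacent to `y` but not to `z`; as `N(y) ⊆ N[z]`, `d` would have to be
`z` itself, which is impossible since `d ≺ z`. Hence `N(z)` is a clique, and together with
`N(x) ⊆ N[z]` this forces `N[x] = N[z]`.
-/

namespace SimpleGraph

variable {V : Type*} (G : SimpleGraph V)

variable {G}

theorem IsLexBFSOrder.adj_of_neighborSet_subset [LinearOrder V] (hlex : G.IsLexBFSOrder)
    {a x y : V} (hxy : x < y) (hya : y < a) (hxa : G.Adj x a)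
    (hy : G.neighborSet y ⊆ insert a (G.neighborSet a)) : G.Adj x y := by
  by_contra hnxy
  obtain ⟨d, hdx, hdy, hda⟩ := hlex a y x hxy hya hxa hnxy
  rcases hy hdy.symm with rfl | had
  · exact (hdx.trans hxy).not_gt hya
  · exact hda had.symm

theorem IsLexBFSOrder.isClique_neighborSet_of_isTop [LinearOrder V]
    (hlex : G.IsLexBFSOrder) {z : V} (hz : IsTop z)
    (hsub : ∀ x : V, G.Adj z x → G.neighborSet x ⊆ insert z (G.neighborSet z)) :
    G.IsClique (G.neighborSet z) := by
  have hlt : ∀ {x y : V}, G.Adj z x → G.Adj z y → x < y → G.Adj x y := fun hx hy hxy =>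
    hlex.adj_of_neighborSet_subset hxy ((hz _).lt_of_ne hy.ne.symm) hx.symm (hsub _ hy)
  intro x hx y hy hne
  rcases hne.lt_or_gt with h | h
  · exact hlt hx hy h
  · exact (hlt hy hx h).symm

theorem closedNeighborSet_eq_of_isClique_neighborSet {x z : V} (hzx : G.Adj z x)
    (hclique : G.IsClique (G.neighborSet z))
    (hsub : G.neighborSet x ⊆ insert z (G.neighborSet z)) :
    insert x (G.neighborSet x) = insert z (G.neighborSet z) := by
  refine (Set.insert_subset (.inr hzx) hsub).antisymm (Set.insert_subset (.inr hzx.symm) ?_)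
  intro w hzw
  by_cases hwx : w = x
  · exact .inl hwx
  · exact .inr (hclique hzx hzw (Ne.symm hwx))

end SimpleGraph

theorem stmt_2_general {V : Type*} [LinearOrder V] (G : SimpleGraph V)
    (hlex : ∀ a b c : V, c < b → b < a → G.Adj c a → ¬ G.Adj c b →
      ∃ d : V, d < c ∧ G.Adj d b ∧ ¬ G.Adj d a)
    (z : V) (hz : ∀ w : V, w ≤ z)
    (hsub : ∀ x : V, G.Adj z x → G.neighborSet x ⊆ {w : V | w = z ∨ G.Adj z w}) :
    (∀ x y : V, G.Adj z x → G.Adj z y → x ≠ y → G.Adj x y) ∧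
    (∀ x : V, G.Adj z x →
      {w : V | w = x ∨ G.Adj x w} = {w : V | w = z ∨ G.Adj z w}) := by
  have hclique : G.IsClique (G.neighborSet z) :=
    SimpleGraph.IsLexBFSOrder.isClique_neighborSet_of_isTop hlex hz hsub
  exact ⟨fun x y hx hy hne => hclique hx hy hne,
    fun x hx => SimpleGraph.closedNeighborSet_eq_of_isClique_neighborSet hx hclique (hsub x hx)⟩

/-- In a non-complete graph with a LexBFS ordering (last vertex `z`),
if every neighbor `x` of `z` satisfies `N(x) ⊆ N[z]`, then any two neighbors of `z`
are adjacent, and consequently `N[x] = N[z]` for every neighbor `x` of `z`. -/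
theorem stmt_2 {V : Type*} [Fintype V] [LinearOrder V] (G : SimpleGraph V)
    (hnc : ∃ u v : V, u ≠ v ∧ ¬ G.Adj u v)
    (hlex : ∀ a b c : V, c < b → b < a → G.Adj c a → ¬ G.Adj c b →
      ∃ d : V, d < c ∧ G.Adj d b ∧ ¬ G.Adj d a)
    (z : V) (hz : ∀ w : V, w ≤ z)
    (hsub : ∀ x : V, G.Adj z x → G.neighborSet x ⊆ {w : V | w = z ∨ G.Adj z w}) :
    (∀ x y : V, G.Adj z x → G.Adj z y → x ≠ y → G.Adj x y) ∧
    (∀ x : V, G.Adj z x →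
      {w : V | w = x ∨ G.Adj x w} = {w : V | w = z ∨ G.Adj z w}) :=
  stmt_2_general G hlex z hz hsub
end

section
/- A finite simple graph G is locally {S₂}-decomposable if and only if G is chordal, where S₂ is the edgeless graph on two vertices. Equivalently: G has no induced cycle of length at least 4 if and only if for every vertex v, every pair of non-adjacent neighbors x, y of v, and every connected component C of G − N[v], at least one of x, y has no neighbor in C. -/
/-!
A shortest path between two vertices is induced. If `x, y` are non-adjacent neighbours of `v`
with neighbours in a common component of `G - N[v]`, a shortest `x`–`y` path through that
component, closed up through `v`, is therefore a hole. Conversely, in a hole `v, x, …, y` the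
vertices strictly between `x` and `y` form a path avoiding `N[v]`, so `x` and `y` have neighbours
in one component of `G - N[v]`.
-/

open SimpleGraph

namespace SimpleGraph

variable {V : Type*} {G : SimpleGraph V}

theorem cycleGraph_adj_iff_val {n : ℕ} {i j : Fin (n + 2)} :
    (cycleGraph (n + 2)).Adj i j ↔
      i.val + 1 = j.val ∨ j.val + 1 = i.val ∨ (i.val = 0 ∧ j.val = n + 1) ∨
        (j.val = 0 ∧ i.val = n + 1) := by
  have := i.isLt; have := j.isLt
  rw [cycleGraph_adj']
  rcases eq_or_ne i j with rfl | hne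
  · simp only [sub_self, Fin.val_zero]; omega
  rcases lt_or_gt_of_ne hne with h | h
  · rw [Fin.sub_val_of_le h.le, Fin.coe_sub_iff_lt.mpr h]
    have : i.val < j.val := h
    omega
  · rw [Fin.sub_val_of_le h.le, Fin.coe_sub_iff_lt.mpr h]
    have : j.val < i.val := h
    omega

theorem Walk.adj_getVert_iff_of_length_eq_dist {u v : V} {p : G.Walk u v}
    (hp : p.length = G.dist u v) {i j : ℕ} (hi : i ≤ p.length) (hj : j ≤ p.length) :
    G.Adj (p.getVert i) (p.getVert j) ↔ i + 1 = j ∨ j + 1 = i := by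
  refine ⟨fun h => ?_, ?_⟩
  · wlog hij : i < j generalizing i j
    · rcases (not_lt.mp hij).eq_or_lt with rfl | hji
      · exact absurd h G.irrefl
      · exact (this hj hi h.symm hji).symm
    by_contra hfar
    have := dist_le ((p.take i).append (.cons h (p.drop j)))
    simp only [Walk.length_append, Walk.length_cons, Walk.take_length, Walk.drop_length] at this
    omega
  · rintro (rfl | rfl)
    · exact p.adj_getVert_succ (by omega)
    · exact (p.adj_getVert_succ (by omega)).symm

theorem exists_cycleGraph_embedding_of_reachable_induce {T : Set V} {v x y : V} (hv : v ∉ T)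
    (hx : x ∈ T) (hy : y ∈ T) (hvx : G.Adj v x) (hvy : G.Adj v y) (hxy : x ≠ y)
    (hnxy : ¬ G.Adj x y) (hvT : ∀ w ∈ T, G.Adj v w → w = x ∨ w = y)
    (hr : (G.induce T).Reachable ⟨x, hx⟩ ⟨y, hy⟩) :
    ∃ n, 4 ≤ n ∧ Nonempty (cycleGraph n ↪g G) := by
  obtain ⟨p, hp⟩ := hr.exists_walk_length_eq_dist
  set k := p.length
  have hk : 1 < k := hp ▸ hr.one_lt_dist_of_ne_of_not_adj (fun h => hxy congr($h.1)) hnxy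
  have hp_adj : ∀ i j, i ≤ k → j ≤ k →
      (G.Adj (p.getVert i) (p.getVert j) ↔ i + 1 = j ∨ j + 1 = i) :=
    fun _ _ hi hj => p.adj_getVert_iff_of_length_eq_dist hp hi hj
  have hp_inj : ∀ i j, i ≤ k → j ≤ k → (p.getVert i : V) = p.getVert j → i = j :=
    fun _ _ hi hj h => (p.isPath_of_length_eq_dist hp).getVert_injOn hi hj (Subtype.ext h)
  have hv_adj : ∀ i ≤ k, G.Adj v (p.getVert i) ↔ i = 0 ∨ i = k := by
    intro i hi
    refine ⟨fun h => ?_, ?_⟩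
    · rcases hvT _ (p.getVert i).2 h with h' | h'
      · exact .inl (hp_inj i 0 hi (Nat.zero_le k) (by rw [h', p.getVert_zero]))
      · exact .inr (hp_inj i k hi le_rfl (by rw [h', p.getVert_length]))
    · rintro (rfl | rfl)
      · simpa using hvx
      · simpa [k] using hvy
  -- the hole is `p` closed up through `v`, which sits at index `k + 1`
  let c : Fin (k + 2) → V := fun i => if i.val ≤ k then p.getVert i else v
  refine ⟨k + 2, by omega, ⟨⟨⟨c, fun i j h => ?_⟩, fun {i j} => ?_⟩⟩⟩
  · have := i.isLt; have := j.isLt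
    simp only [c] at h
    split_ifs at h with hi hj hj
    · exact Fin.ext (hp_inj _ _ hi hj h)
    · exact absurd (h ▸ (p.getVert i).2) hv
    · exact absurd (h ▸ (p.getVert j).2) hv
    · exact Fin.ext (by omega)
  · have := i.isLt; have := j.isLt
    change G.Adj (c i) (c j) ↔ (cycleGraph (k + 2)).Adj i j
    simp only [c, cycleGraph_adj_iff_val]
    split_ifs with hi hj hj
    · rw [hp_adj _ _ hi hj]; omega
    · rw [G.adj_comm, hv_adj _ hi]; omega
    · rw [hv_adj _ hj]; omega
    · simp only [G.irrefl, false_iff]; omega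

/-- A witness that `G` is not locally `{S₂}`-decomposable at `v`. -/
def IsLocalS₂Obstruction (G : SimpleGraph V) (v x y : V) : Prop :=
  G.Adj v x ∧ G.Adj v y ∧ x ≠ y ∧ ¬ G.Adj x y ∧
    ∃ w₁ w₂ : {w : V | ¬ (w = v ∨ G.Adj v w)},
      (G.induce {w : V | ¬ (w = v ∨ G.Adj v w)}).Reachable w₁ w₂ ∧ G.Adj x w₁ ∧ G.Adj y w₂

theorem IsLocalS₂Obstruction.exists_cycleGraph_embedding {v x y : V}
    (h : G.IsLocalS₂Obstruction v x y) : ∃ n, 4 ≤ n ∧ Nonempty (cycleGraph n ↪g G) := by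
  obtain ⟨hvx, hvy, hxy, hnxy, w₁, w₂, hr, hxw₁, hyw₂⟩ := h
  set S := {w : V | ¬ (w = v ∨ G.Adj v w)}
  have hST : S ⊆ insert x (insert y S) := fun w hw => .inr (.inr hw)
  refine exists_cycleGraph_embedding_of_reachable_induce (T := insert x (insert y S))
    (fun h => ?_) (.inl rfl) (.inr (.inl rfl)) hvx hvy hxy hnxy ?_ ?_
  · rcases h with rfl | rfl | h
    exacts [G.irrefl hvx, G.irrefl hvy, h (.inl rfl)]
  · rintro w (rfl | rfl | hw) hvw
    exacts [.inl rfl, .inr rfl, absurd (.inr hvw) hw]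
  · have hr' := hr.map (induceHomOfLE G hST).toHom
    refine .trans (Adj.reachable ?_) (hr'.trans (Adj.reachable ?_))
    exacts [hxw₁, hyw₂.symm]

theorem isLocalS₂Obstruction_of_cycleGraph_embedding {m : ℕ} (f : cycleGraph (m + 4) ↪g G) :
    G.IsLocalS₂Obstruction (f ⟨0, by omega⟩) (f ⟨1, by omega⟩) (f ⟨m + 3, by omega⟩) := by
  have hadj : ∀ i j (hi : i < m + 4) (hj : j < m + 4), G.Adj (f ⟨i, hi⟩) (f ⟨j, hj⟩) ↔
      i + 1 = j ∨ j + 1 = i ∨ (i = 0 ∧ j = m + 3) ∨ (j = 0 ∧ i = m + 3) := by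
    intro i j hi hj
    simp only [f.map_adj_iff, cycleGraph_adj_iff_val]
  have hinj : ∀ i j (hi : i < m + 4) (hj : j < m + 4), f ⟨i, hi⟩ = f ⟨j, hj⟩ → i = j :=
    fun i j hi hj h => congr($(f.injective h).val)
  set S := {w : V | ¬ (w = f ⟨0, by omega⟩ ∨ G.Adj (f ⟨0, by omega⟩) w)}
  have hS : ∀ i (hi₂ : 2 ≤ i) (hi : i ≤ m + 2), f ⟨i, by omega⟩ ∈ S := by
    rintro i hi₂ hi (h | h)
    · have := hinj _ _ _ _ h; omega
    · rw [hadj] at h; omega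
  have hreach : ∀ j (hj₂ : 2 ≤ j) (hj : j ≤ m + 2),
      (G.induce S).Reachable ⟨_, hS 2 le_rfl (by omega)⟩ ⟨_, hS j hj₂ hj⟩ := by
    intro j hj₂
    induction j, hj₂ using Nat.le_induction with
    | base => exact fun _ => .rfl
    | succ j hj₂ ih =>
      refine fun hj => (ih (by omega)).trans (Adj.reachable ?_)
      exact (hadj _ _ _ _).mpr (by omega)
  refine ⟨(hadj _ _ _ _).mpr (by omega), (hadj _ _ _ _).mpr (by omega),
    fun h => absurd (hinj _ _ _ _ h) (by omega), fun h => absurd ((hadj _ _ _ _).mp h) (by omega),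
    _, _, hreach (m + 2) (by omega) le_rfl, (hadj _ _ _ _).mpr (by omega),
    (hadj _ _ _ _).mpr (by omega)⟩

end SimpleGraph

theorem stmt_4_general {V : Type*} (G : SimpleGraph V) :
    (¬ ∃ n : ℕ, 4 ≤ n ∧ Nonempty (SimpleGraph.cycleGraph n ↪g G)) ↔
    (∀ v x y : V, G.Adj v x → G.Adj v y → x ≠ y → ¬ G.Adj x y →
      ∀ C : (G.induce {w : V | ¬ (w = v ∨ G.Adj v w)}).ConnectedComponent,
        (∀ w : {w : V | ¬ (w = v ∨ G.Adj v w)},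
          (G.induce {w : V | ¬ (w = v ∨ G.Adj v w)}).connectedComponentMk w = C →
          ¬ G.Adj x ↑w) ∨
        (∀ w : {w : V | ¬ (w = v ∨ G.Adj v w)},
          (G.induce {w : V | ¬ (w = v ∨ G.Adj v w)}).connectedComponentMk w = C →
          ¬ G.Adj y ↑w)) := by
  constructor
  · intro hno v x y hvx hvy hxy hnxy C
    by_contra! ⟨⟨w₁, rfl, hxw₁⟩, w₂, hw₂, hyw₂⟩
    exact hno (IsLocalS₂Obstruction.exists_cycleGraph_embedding
      ⟨hvx, hvy, hxy, hnxy, w₁, w₂, ConnectedComponent.exact hw₂.symm, hxw₁, hyw₂⟩)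
  · rintro hloc ⟨n, hn, ⟨f⟩⟩
    obtain ⟨m, rfl⟩ := Nat.exists_eq_add_of_le' hn
    obtain ⟨hvx, hvy, hxy, hnxy, w₁, w₂, hr, hxw₁, hyw₂⟩ :=
      isLocalS₂Obstruction_of_cycleGraph_embedding f
    rcases hloc _ _ _ hvx hvy hxy hnxy ((G.induce _).connectedComponentMk w₁) with h | h
    · exact h w₁ rfl hxw₁
    · exact h w₂ (ConnectedComponent.sound hr.symm) hyw₂

/-- `G` is locally `{S₂}`-decomposable iff `G` is chordal, stated in the
equivalent explicit form: `G` has no induced cycle (hole) of length at least 4 iff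
for every vertex `v`, every pair of non-adjacent neighbors `x, y` of `v`, and every
connected component `C` of `G − N[v]`, at least one of `x, y` has no neighbor in `C`. -/
theorem stmt_4 {V : Type*} [Fintype V] (G : SimpleGraph V) :
    (¬ ∃ n : ℕ, 4 ≤ n ∧ Nonempty (SimpleGraph.cycleGraph n ↪g G)) ↔
    (∀ v x y : V, G.Adj v x → G.Adj v y → x ≠ y → ¬ G.Adj x y →
      ∀ C : (G.induce {w : V | ¬ (w = v ∨ G.Adj v w)}).ConnectedComponent,
        (∀ w : {w : V | ¬ (w = v ∨ G.Adj v w)},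
          (G.induce {w : V | ¬ (w = v ∨ G.Adj v w)}).connectedComponentMk w = C →
          ¬ G.Adj x ↑w) ∨
        (∀ w : {w : V | ¬ (w = v ∨ G.Adj v w)},
          (G.induce {w : V | ¬ (w = v ∨ G.Adj v w)}).connectedComponentMk w = C →
          ¬ G.Adj y ↑w)) :=
  stmt_4_general G
end

section
/- If a finite simple graph G contains a 3-wheel as an induced subgraph, then G is not locally {P₃}-decomposable: there exist a vertex v, an induced path x–y–z in N(v), and a connected component C of G − N[v] such that both x and z have a neighbor in C. -/
/-!
Let `u` be the centre of the wheel, adjacent to three consecutive hole vertices `x, v, z`. Take the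
vertex `v`: the path `x–u–z` lies in `N(v)` and is induced because the hole has length at least 4,
and since the hole is induced, the rest of the hole avoids `N[v]` and is a path from a neighbour of
`x` to a neighbour of `z`, so it lies in one component of `G − N[v]`.
-/

open SimpleGraph

/-- `G` contains a 3-wheel: there is a hole (an induced cycle of length at least 4,
given by a graph embedding of `cycleGraph n` into `G`) and a vertex `v` off the hole
adjacent to three consecutive vertices of the hole. -/
def ContainsThreeWheel {V : Type*} (G : SimpleGraph V) : Prop :=
  ∃ (n : ℕ), 4 ≤ n ∧ ∃ (e : SimpleGraph.cycleGraph n ↪g G) (v : V),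
    (∀ i : Fin n, v ≠ e i) ∧
    ∃ i j k : Fin n, (SimpleGraph.cycleGraph n).Adj i j ∧
      (SimpleGraph.cycleGraph n).Adj j k ∧ i ≠ k ∧
      G.Adj v (e i) ∧ G.Adj v (e j) ∧ G.Adj v (e k)

namespace SimpleGraph

theorem cycleGraph_adj_iff_eq_sub_one_or_eq_add_one {n : ℕ} {u v : Fin (n + 2)} :
    (cycleGraph (n + 2)).Adj u v ↔ v = u - 1 ∨ v = u + 1 := by
  rw [← mem_neighborSet, cycleGraph_neighborSet, Set.mem_insert_iff, Set.mem_singleton_iff]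

theorem cycleGraph_adj_zero_iff {n : ℕ} {t : Fin (n + 2)} :
    (cycleGraph (n + 2)).Adj 0 t ↔ t.val = n + 1 ∨ t.val = 1 := by
  simp [cycleGraph_adj_iff_eq_sub_one_or_eq_add_one, Fin.ext_iff, Fin.coe_neg_one]

theorem cycleGraph_adj_of_val_add_one {n : ℕ} {u v : Fin n} (h : u.val + 1 = v.val) :
    (cycleGraph n).Adj u v :=
  pathGraph_le_cycleGraph (pathGraph_adj.2 (Or.inl h))

theorem cycleGraph_not_adj_one_neg_one {n : ℕ} : ¬(cycleGraph (n + 4)).Adj 1 (-1) := by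
  rw [cycleGraph_adj_iff_eq_sub_one_or_eq_add_one]
  simp [Fin.ext_iff, Fin.coe_neg_one, Fin.val_add, Nat.mod_eq_of_lt (show 2 < n + 4 by omega)]

theorem cycleGraph_adj_add_left {n : ℕ} (j : Fin (n + 2)) {u v : Fin (n + 2)} :
    (cycleGraph (n + 2)).Adj (j + u) (j + v) ↔ (cycleGraph (n + 2)).Adj u v := by
  simp only [cycleGraph_adj, add_sub_add_left_eq_sub]

def cycleGraph.addLeft {n : ℕ} (j : Fin (n + 2)) : cycleGraph (n + 2) ≃g cycleGraph (n + 2) :=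
  ⟨Equiv.addLeft j, cycleGraph_adj_add_left j⟩

theorem Embedding.eq_or_adj_iff {W V : Type*} {H : SimpleGraph W} {G : SimpleGraph V}
    (e : H ↪g G) {s t : W} : e t = e s ∨ G.Adj (e s) (e t) ↔ t = s ∨ H.Adj s t := by
  rw [e.injective.eq_iff, e.map_adj_iff]

variable {V : Type*} {G : SimpleGraph V}

/-- The negation of local `{P₃}`-decomposability: on an induced path `x–y–z` the vertices with a
non-neighbour on the path are `x` and `z`. -/
def NotLocallyP3Decomposable (G : SimpleGraph V) : Prop :=
  ∃ v x y z : V, G.Adj v x ∧ G.Adj v y ∧ G.Adj v z ∧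
      G.Adj x y ∧ G.Adj y z ∧ x ≠ z ∧ ¬ G.Adj x z ∧
      ∃ C : (G.induce {w : V | ¬ (w = v ∨ G.Adj v w)}).ConnectedComponent,
        (∃ w : {w : V | ¬ (w = v ∨ G.Adj v w)},
          (G.induce {w : V | ¬ (w = v ∨ G.Adj v w)}).connectedComponentMk w = C ∧
          G.Adj x ↑w) ∧
        (∃ w : {w : V | ¬ (w = v ∨ G.Adj v w)},
          (G.induce {w : V | ¬ (w = v ∨ G.Adj v w)}).connectedComponentMk w = C ∧
          G.Adj z ↑w)

theorem exists_connectedComponent_adj_adj_of_reachable {S : Set V} {x z : V} {a b : S}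
    (hab : (G.induce S).Reachable a b) (hxa : G.Adj x a) (hzb : G.Adj z b) :
    ∃ C : (G.induce S).ConnectedComponent,
      (∃ w : S, (G.induce S).connectedComponentMk w = C ∧ G.Adj x w) ∧
      (∃ w : S, (G.induce S).connectedComponentMk w = C ∧ G.Adj z w) :=
  ⟨_, ⟨a, rfl, hxa⟩, ⟨b, (ConnectedComponent.sound hab).symm, hzb⟩⟩

def holeArc {n : ℕ} (e : cycleGraph (n + 4) ↪g G) :
    pathGraph (n + 1) →g G.induce {w | ¬(w = e 0 ∨ G.Adj (e 0) w)} where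
  toFun t := ⟨e ⟨t + 2, by omega⟩, by
    rw [Set.mem_ofPred_eq, e.eq_or_adj_iff, cycleGraph_adj_zero_iff, Fin.ext_iff]
    simp only [Fin.val_zero]
    omega⟩
  map_rel' {s t} h := by
    refine e.map_adj_iff.2 (pathGraph_le_cycleGraph ?_)
    rw [pathGraph_adj] at h ⊢
    simp only
    omega

theorem notLocallyP3Decomposable_of_adj_hole {n : ℕ} (e : cycleGraph (n + 4) ↪g G) {u : V}
    (hz : G.Adj u (e (-1))) (hv : G.Adj u (e 0)) (hx : G.Adj u (e 1)) :
    NotLocallyP3Decomposable G :=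
  ⟨e 0, e 1, u, e (-1),
    e.map_adj_iff.2 (cycleGraph_adj_zero_iff.2 (Or.inr (Fin.val_one _))), hv.symm,
    e.map_adj_iff.2 (cycleGraph_adj_zero_iff.2 (Or.inl Fin.coe_neg_one)), hx.symm, hz,
    e.injective.ne (by simp [Fin.ext_iff, Fin.coe_neg_one]),
    e.map_adj_iff.not.2 cycleGraph_not_adj_one_neg_one,
    exists_connectedComponent_adj_adj_of_reachable
      ((pathGraph_preconnected _ 0 (Fin.last n)).map (holeArc e))
      (e.map_adj_iff.2 (cycleGraph_adj_of_val_add_one rfl))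
      (e.map_adj_iff.2 (cycleGraph_adj_of_val_add_one (Fin.coe_neg_one (n := n + 3)).symm)).symm⟩

theorem notLocallyP3Decomposable_of_adj_three_consecutive {n : ℕ} (e : cycleGraph (n + 4) ↪g G)
    {u : V} (j : Fin (n + 4)) (hprev : G.Adj u (e (j - 1))) (hj : G.Adj u (e j))
    (hnext : G.Adj u (e (j + 1))) : NotLocallyP3Decomposable G := by
  refine notLocallyP3Decomposable_of_adj_hole ((cycleGraph.addLeft j).toEmbedding.trans e)
    (u := u) ?_ ?_ ?_
  all_goals simpa [cycleGraph.addLeft, ← sub_eq_add_neg]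

end SimpleGraph

theorem stmt_8_general {V : Type*} (G : SimpleGraph V)
    (h : ContainsThreeWheel G) :
    ∃ v x y z : V, G.Adj v x ∧ G.Adj v y ∧ G.Adj v z ∧
      G.Adj x y ∧ G.Adj y z ∧ x ≠ z ∧ ¬ G.Adj x z ∧
      ∃ C : (G.induce {w : V | ¬ (w = v ∨ G.Adj v w)}).ConnectedComponent,
        (∃ w : {w : V | ¬ (w = v ∨ G.Adj v w)},
          (G.induce {w : V | ¬ (w = v ∨ G.Adj v w)}).connectedComponentMk w = C ∧
          G.Adj x ↑w) ∧
        (∃ w : {w : V | ¬ (w = v ∨ G.Adj v w)},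
          (G.induce {w : V | ¬ (w = v ∨ G.Adj v w)}).connectedComponentMk w = C ∧
          G.Adj z ↑w) := by
  obtain ⟨n, hn, e, u, -, i, j, k, hij, hjk, hik, hui, huj, huk⟩ := h
  obtain ⟨n, rfl⟩ : ∃ m, n = m + 4 := ⟨n - 4, by omega⟩
  rw [adj_comm, cycleGraph_adj_iff_eq_sub_one_or_eq_add_one] at hij
  rw [cycleGraph_adj_iff_eq_sub_one_or_eq_add_one] at hjk
  rcases hij with rfl | rfl <;> rcases hjk with rfl | rfl
  · exact absurd rfl hik
  · exact notLocallyP3Decomposable_of_adj_three_consecutive e j hui huj huk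
  · exact notLocallyP3Decomposable_of_adj_three_consecutive e j huk huj hui
  · exact absurd rfl hik

/-- if `G` contains a 3-wheel, then `G` is not locally
`{P₃}`-decomposable: there exist a vertex `v`, an induced path `x–y–z` in `N(v)`, and
a connected component `C` of `G − N[v]` such that both `x` and `z` have a neighbor
in `C`. -/
theorem stmt_8 {V : Type*} [Fintype V] (G : SimpleGraph V)
    (h : ContainsThreeWheel G) :
    ∃ v x y z : V, G.Adj v x ∧ G.Adj v y ∧ G.Adj v z ∧
      G.Adj x y ∧ G.Adj y z ∧ x ≠ z ∧ ¬ G.Adj x z ∧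
      ∃ C : (G.induce {w : V | ¬ (w = v ∨ G.Adj v w)}).ConnectedComponent,
        (∃ w : {w : V | ¬ (w = v ∨ G.Adj v w)},
          (G.induce {w : V | ¬ (w = v ∨ G.Adj v w)}).connectedComponentMk w = C ∧
          G.Adj x ↑w) ∧
        (∃ w : {w : V | ¬ (w = v ∨ G.Adj v w)},
          (G.induce {w : V | ¬ (w = v ∨ G.Adj v w)}).connectedComponentMk w = C ∧
          G.Adj z ↑w) :=
  stmt_8_general G h
end

section
/- Every non-empty finite simple graph in which every vertex has a neighborhood inducing the disjoint union of at most two cliques is (2ω − 1)-colorable; more precisely, if every non-empty induced subgraph of G has a vertex v with N(v) inducing a disjoint union of at most two cliques, then χ(G) ≤ 2ω(G) − 1 (when G is non-empty). -/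
/-!
A vertex whose neighbourhood is the union of two cliques `A` and `B` has degree at most
`2ω - 2`, since `A ∪ {v}` and `B ∪ {v}` are cliques. The hypothesis, applied to every vertex
subset, therefore makes `G` `(2ω - 2)`-degenerate, and greedy colouring, which gives each vertex
a colour missing from its fewer than `2ω - 1` earlier neighbours, uses at most `2ω - 1` colours.
-/

open SimpleGraph Finset

namespace SimpleGraph

variable {V : Type*} (G : SimpleGraph V)

lemma update_ne_update_of_adj {α : Type*} [DecidableEq V] {c : V → α} {s : Finset V}
    {v : V} {k : α} (hc : ∀ a ∈ s.erase v, ∀ b ∈ s.erase v, G.Adj a b → c a ≠ c b)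
    (hk : ∀ w ∈ s, G.Adj v w → c w ≠ k) :
    ∀ a ∈ s, ∀ b ∈ s, G.Adj a b → Function.update c v k a ≠ Function.update c v k b := by
  intro a ha b hb hab
  obtain rfl | hav := eq_or_ne a v
  · rw [Function.update_self, Function.update_of_ne hab.ne.symm]
    exact (hk b hb hab).symm
  obtain rfl | hbv := eq_or_ne b v
  · rw [Function.update_self, Function.update_of_ne hav]
    exact hk a ha hab.symm
  rw [Function.update_of_ne hav, Function.update_of_ne hbv]
  exact hc a (mem_erase.2 ⟨hav, ha⟩) b (mem_erase.2 ⟨hbv, hb⟩) hab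

theorem colorable_of_forall_exists_card_adj_lt [Fintype V] [DecidableRel G.Adj] {n : ℕ}
    (hdeg : ∀ s : Finset V, s.Nonempty → ∃ v ∈ s, #{w ∈ s | G.Adj v w} < n) :
    G.Colorable n := by
  classical
  cases isEmpty_or_nonempty V
  · exact .of_isEmpty n
  have hn : 0 < n := by
    obtain ⟨v, -, hv⟩ := hdeg {Classical.arbitrary V} (singleton_nonempty _)
    exact Nat.zero_lt_of_lt hv
  suffices ∀ s : Finset V, ∃ c : V → Fin n, ∀ a ∈ s, ∀ b ∈ s, G.Adj a b → c a ≠ c b by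
    obtain ⟨c, hc⟩ := this univ
    exact ⟨⟨c, fun hab => hc _ (mem_univ _) _ (mem_univ _) hab⟩⟩
  intro s
  induction s using Finset.strongInduction with
  | _ s ih =>
    obtain rfl | hs := s.eq_empty_or_nonempty
    · exact ⟨fun _ => ⟨0, hn⟩, by simp⟩
    obtain ⟨v, hv, hdeg_v⟩ := hdeg s hs
    obtain ⟨c, hc⟩ := ih (s.erase v) (erase_ssubset hv)
    have hfree : #({w ∈ s | G.Adj v w}.image c) < #(univ : Finset (Fin n)) := by
      simpa using card_image_le.trans_lt hdeg_v
    obtain ⟨k, -, hk⟩ := exists_mem_notMem_of_card_lt_card hfree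
    refine ⟨Function.update c v k, G.update_ne_update_of_adj hc fun w hw hvw hwk => hk ?_⟩
    exact hwk ▸ mem_image_of_mem c (mem_filter.2 ⟨hw, hvw⟩)

variable {G}

lemma IsClique.ncard_le_cliqueNum [Finite V] {s : Set V} (hs : G.IsClique s) :
    s.ncard ≤ G.cliqueNum := by
  obtain ⟨t, rfl⟩ := s.toFinite.exists_finset_coe
  simpa using IsClique.card_le_cliqueNum (tc := hs)

lemma IsClique.ncard_add_one_le_cliqueNum [Finite V] {v : V} {s : Set V} (hs : G.IsClique s)
    (hsv : s ⊆ G.neighborSet v) : s.ncard + 1 ≤ G.cliqueNum := by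
  have hvs : v ∉ s := fun hv => G.loopless.irrefl v (hsv hv)
  rw [← Set.ncard_insert_of_notMem hvs]
  exact (hs.insert fun b hb _ => hsv hb).ncard_le_cliqueNum

lemma ncard_union_add_two_le_of_isClique [Finite V] {v : V} {A B : Set V} (hA : G.IsClique A)
    (hB : G.IsClique B) (hAB : A ∪ B ⊆ G.neighborSet v) :
    (A ∪ B).ncard + 2 ≤ 2 * G.cliqueNum := by
  have hA' := hA.ncard_add_one_le_cliqueNum (Set.subset_union_left.trans hAB)
  have hB' := hB.ncard_add_one_le_cliqueNum (Set.subset_union_right.trans hAB)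
  have := Set.ncard_union_le A B
  omega

end SimpleGraph

theorem stmt_12_general {V : Type*} [Fintype V] (G : SimpleGraph V)
    (h : ∀ X : Set V, X.Nonempty → ∃ v ∈ X,
      ∃ A B : Set V, A ∪ B = {w ∈ X | G.Adj v w} ∧ Disjoint A B ∧
        G.IsClique A ∧ G.IsClique B ∧ ∀ a ∈ A, ∀ b ∈ B, ¬ G.Adj a b) :
    G.chromaticNumber ≤ (2 * G.cliqueNum - 1 : ℕ) := by
  classical
  refine Colorable.chromaticNumber_le (G.colorable_of_forall_exists_card_adj_lt fun s hs => ?_)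
  obtain ⟨v, hv, A, B, hAB, -, hA, hB, -⟩ := h s (coe_nonempty.2 hs)
  have hN : (({w ∈ s | G.Adj v w} : Finset V) : Set V) = A ∪ B := by
    rw [hAB]; ext; simp
  have hbound := ncard_union_add_two_le_of_isClique hA hB (v := v) <| by
    rw [hAB]; exact fun _ hw => hw.2
  refine ⟨v, hv, ?_⟩
  rw [← Set.ncard_coe_finset, hN]
  omega

/-- if every non-empty induced subgraph of `G` (given by a non-empty
vertex subset `X`) contains a vertex `v` whose neighborhood inside `X` is a disjoint
union of at most two cliques (two disjoint cliques with no edges between them),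
then `χ(G) ≤ 2·ω(G) − 1`. -/
theorem stmt_12 {V : Type*} [Fintype V] [Nonempty V] (G : SimpleGraph V)
    (h : ∀ X : Set V, X.Nonempty → ∃ v ∈ X,
      ∃ A B : Set V, A ∪ B = {w ∈ X | G.Adj v w} ∧ Disjoint A B ∧
        G.IsClique A ∧ G.IsClique B ∧ ∀ a ∈ A, ∀ b ∈ B, ¬ G.Adj a b) :
    G.chromaticNumber ≤ (2 * G.cliqueNum - 1 : ℕ) :=
  stmt_12_general G h
end

section
/- If a finite simple graph G contains an induced theta, then G is not locally {S₃}-decomposable: there exist a vertex v, three pairwise non-adjacent vertices x, y, z in N(v), and a connected component C of G − N[v] such that each of x, y, z has a neighbor in C. -/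
/-!
Take `v` to be an end `a` of the theta and `x, y, z` the second vertices of its three paths.
Because the theta is induced, the only neighbours of `a` on it are these three vertices, which
are pairwise non-adjacent, and the rest of each path avoids `N[a]`. So the remainders of the
three paths all lie in the component of `G − N[a]` containing the other end `b`, and each of
`x, y, z` is adjacent to the third vertex of its path.
-/

open SimpleGraph

/-- `G` contains an induced theta: two non-adjacent vertices `a ≠ b` joined by three
paths, each of length at least 2, internally vertex-disjoint, such that the only
edges of `G` between vertices of the configuration are the edges of the paths
(so the union of any two of the paths induces a cycle). -/
def ContainsTheta {V : Type*} (G : SimpleGraph V) : Prop :=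
  ∃ (a b : V) (P : Fin 3 → G.Walk a b),
    a ≠ b ∧ ¬ G.Adj a b ∧
    (∀ i, (P i).IsPath ∧ 2 ≤ (P i).length) ∧
    (∀ i j, i ≠ j → ∀ w, w ∈ (P i).support → w ∈ (P j).support → w = a ∨ w = b) ∧
    (∀ u v : V, G.Adj u v → (∃ i, u ∈ (P i).support) → (∃ j, v ∈ (P j).support) →
      ∃ k, ((P k).toSubgraph).Adj u v)

namespace SimpleGraph

variable {V : Type*} {G : SimpleGraph V}

/-- `ContainsTheta` for a family of paths indexed by any type; `2 ≤ length` is omitted since it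
follows from `ne` and `not_adj`. -/
structure IsInducedTheta {ι : Type*} {a b : V} (P : ι → G.Walk a b) : Prop where
  ne : a ≠ b
  not_adj : ¬ G.Adj a b
  isPath : ∀ i, (P i).IsPath
  eq_or_eq_of_mem_support : ∀ i j, i ≠ j → ∀ w, w ∈ (P i).support → w ∈ (P j).support →
    w = a ∨ w = b
  exists_toSubgraph_adj : ∀ u v : V, G.Adj u v → (∃ i, u ∈ (P i).support) →
    (∃ j, v ∈ (P j).support) → ∃ k, ((P k).toSubgraph).Adj u v

theorem Walk.support_eq_cons_snd_cons {u v : V} {p : G.Walk u v} (hp : ¬ p.Nil)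
    (hp' : ¬ p.tail.Nil) : p.support = u :: p.snd :: p.tail.tail.support := by
  rw [Walk.cons_support_tail hp', Walk.cons_support_tail hp]

namespace IsInducedTheta

variable {ι : Type*} {a b : V} {P : ι → G.Walk a b}

theorem not_nil (hT : IsInducedTheta P) (i : ι) : ¬ (P i).Nil :=
  Walk.not_nil_of_ne hT.ne

theorem adj_snd (hT : IsInducedTheta P) (i : ι) : G.Adj a (P i).snd :=
  (P i).adj_snd (hT.not_nil i)

theorem snd_ne_start (hT : IsInducedTheta P) (i : ι) : (P i).snd ≠ a :=
  (hT.adj_snd i).ne'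

theorem snd_ne_end (hT : IsInducedTheta P) (i : ι) : (P i).snd ≠ b :=
  fun h => hT.not_adj (h ▸ hT.adj_snd i)

theorem not_nil_tail (hT : IsInducedTheta P) (i : ι) : ¬ (P i).tail.Nil :=
  Walk.not_nil_of_ne (hT.snd_ne_end i)

theorem support_eq (hT : IsInducedTheta P) (i : ι) :
    (P i).support = a :: (P i).snd :: (P i).tail.tail.support :=
  Walk.support_eq_cons_snd_cons (hT.not_nil i) (hT.not_nil_tail i)

theorem snd_mem_support (hT : IsInducedTheta P) (i : ι) : (P i).snd ∈ (P i).support := by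
  simp [hT.support_eq i]

theorem eq_of_snd_mem_support (hT : IsInducedTheta P) {i j : ι}
    (h : (P i).snd ∈ (P j).support) : j = i := by
  by_contra hji
  rcases hT.eq_or_eq_of_mem_support j i hji _ h (hT.snd_mem_support i) with h' | h'
  exacts [hT.snd_ne_start i h', hT.snd_ne_end i h']

theorem snd_injective (hT : IsInducedTheta P) : Function.Injective fun i => (P i).snd :=
  fun i j hij => hT.eq_of_snd_mem_support (i := j) (by
    simpa only [hij] using hT.snd_mem_support i)

theorem not_adj_snd (hT : IsInducedTheta P) {i j : ι} (hij : i ≠ j) :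
    ¬ G.Adj (P i).snd (P j).snd := by
  intro h
  obtain ⟨k, hk⟩ := hT.exists_toSubgraph_adj _ _ h ⟨i, hT.snd_mem_support i⟩
    ⟨j, hT.snd_mem_support j⟩
  have hki := hT.eq_of_snd_mem_support (Walk.mem_support_of_adj_toSubgraph hk)
  have hkj := hT.eq_of_snd_mem_support (Walk.mem_support_of_adj_toSubgraph hk.symm)
  exact hij (hki.symm.trans hkj)

theorem exists_eq_snd_of_adj (hT : IsInducedTheta P) {w : V} (hw : G.Adj a w)
    (hwP : ∃ j, w ∈ (P j).support) : ∃ k, w = (P k).snd := by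
  obtain ⟨i⟩ := hwP.nonempty
  obtain ⟨k, hk⟩ := hT.exists_toSubgraph_adj a w hw ⟨i, (P i).start_mem_support⟩ hwP
  exact ⟨k, ((hT.isPath k).snd_of_toSubgraph_adj hk).symm⟩

theorem notMem_closedNeighborhood_of_mem_tail_tail (hT : IsInducedTheta P) {i : ι} {w : V}
    (hw : w ∈ (P i).tail.tail.support) : ¬ (w = a ∨ G.Adj a w) := by
  have hnodup := (hT.isPath i).support_nodup
  rw [hT.support_eq i, List.nodup_cons, List.nodup_cons, List.mem_cons, not_or] at hnodup
  have hwP : w ∈ (P i).support := by simp [hT.support_eq i, hw]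
  rintro (rfl | haw)
  · exact hnodup.1.2 hw
  · obtain ⟨k, rfl⟩ := hT.exists_eq_snd_of_adj haw ⟨i, hwP⟩
    obtain rfl := hT.eq_of_snd_mem_support hwP
    exact hnodup.2.1 hw

theorem end_notMem_closedNeighborhood (hT : IsInducedTheta P) : ¬ (b = a ∨ G.Adj a b) := by
  rintro (h | h)
  exacts [hT.ne h.symm, hT.not_adj h]

theorem exists_adj_snd_connectedComponentMk_eq_end (hT : IsInducedTheta P) (i : ι) :
    ∃ w : {w : V | ¬ (w = a ∨ G.Adj a w)},
      (G.induce {w : V | ¬ (w = a ∨ G.Adj a w)}).connectedComponentMk w =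
        (G.induce {w : V | ¬ (w = a ∨ G.Adj a w)}).connectedComponentMk
          ⟨b, hT.end_notMem_closedNeighborhood⟩ ∧
      G.Adj (P i).snd ↑w := by
  have hq (w) := hT.notMem_closedNeighborhood_of_mem_tail_tail (i := i) (w := w)
  exact ⟨_, ConnectedComponent.sound ((P i).tail.tail.induce _ hq).reachable,
    (P i).tail.adj_snd (hT.not_nil_tail i)⟩

end IsInducedTheta

end SimpleGraph

theorem ContainsTheta.exists_isInducedTheta {V : Type*} {G : SimpleGraph V}
    (h : ContainsTheta G) :
    ∃ (a b : V) (P : Fin 3 → G.Walk a b), IsInducedTheta P := by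
  obtain ⟨a, b, P, hab, hnadj, hpath, hdisj, hind⟩ := h
  exact ⟨a, b, P, hab, hnadj, fun i => (hpath i).1, hdisj, hind⟩

theorem stmt_14_general {V : Type*} (G : SimpleGraph V)
    (h : ContainsTheta G) :
    ∃ v x y z : V, G.Adj v x ∧ G.Adj v y ∧ G.Adj v z ∧
      x ≠ y ∧ y ≠ z ∧ x ≠ z ∧ ¬ G.Adj x y ∧ ¬ G.Adj y z ∧ ¬ G.Adj x z ∧
      ∃ C : (G.induce {w : V | ¬ (w = v ∨ G.Adj v w)}).ConnectedComponent,
        (∃ w : {w : V | ¬ (w = v ∨ G.Adj v w)},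
          (G.induce {w : V | ¬ (w = v ∨ G.Adj v w)}).connectedComponentMk w = C ∧
          G.Adj x ↑w) ∧
        (∃ w : {w : V | ¬ (w = v ∨ G.Adj v w)},
          (G.induce {w : V | ¬ (w = v ∨ G.Adj v w)}).connectedComponentMk w = C ∧
          G.Adj y ↑w) ∧
        (∃ w : {w : V | ¬ (w = v ∨ G.Adj v w)},
          (G.induce {w : V | ¬ (w = v ∨ G.Adj v w)}).connectedComponentMk w = C ∧
          G.Adj z ↑w) := by
  obtain ⟨a, b, P, hT⟩ := h.exists_isInducedTheta
  exact ⟨a, (P 0).snd, (P 1).snd, (P 2).snd, hT.adj_snd 0, hT.adj_snd 1, hT.adj_snd 2,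
    hT.snd_injective.ne (by decide), hT.snd_injective.ne (by decide),
    hT.snd_injective.ne (by decide),
    hT.not_adj_snd (by decide), hT.not_adj_snd (by decide), hT.not_adj_snd (by decide),
    _, hT.exists_adj_snd_connectedComponentMk_eq_end 0,
    hT.exists_adj_snd_connectedComponentMk_eq_end 1,
    hT.exists_adj_snd_connectedComponentMk_eq_end 2⟩

/-- if `G` contains an induced theta, then `G` is not locally
`{S₃}`-decomposable: there exist a vertex `v`, three pairwise distinct non-adjacent
vertices `x, y, z` in `N(v)`, and a connected component `C` of `G − N[v]` such that
each of `x, y, z` has a neighbor in `C`. -/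
theorem stmt_14 {V : Type*} [Fintype V] (G : SimpleGraph V)
    (h : ContainsTheta G) :
    ∃ v x y z : V, G.Adj v x ∧ G.Adj v y ∧ G.Adj v z ∧
      x ≠ y ∧ y ≠ z ∧ x ≠ z ∧ ¬ G.Adj x y ∧ ¬ G.Adj y z ∧ ¬ G.Adj x z ∧
      ∃ C : (G.induce {w : V | ¬ (w = v ∨ G.Adj v w)}).ConnectedComponent,
        (∃ w : {w : V | ¬ (w = v ∨ G.Adj v w)},
          (G.induce {w : V | ¬ (w = v ∨ G.Adj v w)}).connectedComponentMk w = C ∧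
          G.Adj x ↑w) ∧
        (∃ w : {w : V | ¬ (w = v ∨ G.Adj v w)},
          (G.induce {w : V | ¬ (w = v ∨ G.Adj v w)}).connectedComponentMk w = C ∧
          G.Adj y ↑w) ∧
        (∃ w : {w : V | ¬ (w = v ∨ G.Adj v w)},
          (G.induce {w : V | ¬ (w = v ∨ G.Adj v w)}).connectedComponentMk w = C ∧
          G.Adj z ↑w) :=
  stmt_14_general G h
end

section
/- Let G be a finite simple graph. If G contains an induced prism, then G is not locally {P̄₃}-decomposable: there exist a vertex v, vertices x, y, z in N(v) with xy an edge and xz, yz non-edges, and a component C of G − N[v] in which all of x, y, z have neighbors. -/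
open SimpleGraph

/-- `G` contains an induced prism: two disjoint triangles `a₁a₂a₃` and `b₁b₂b₃`
joined by three vertex-disjoint paths `Pᵢ` from `aᵢ` to `bᵢ` of length at least 1,
such that the only edges of `G` between vertices of the configuration are the edges
of the paths and the edges of the two triangles (so the union of any two of the
paths induces a cycle). -/
def ContainsPrism {V : Type*} (G : SimpleGraph V) : Prop :=
  ∃ (a b : Fin 3 → V) (P : (i : Fin 3) → G.Walk (a i) (b i)),
    (∀ i j, i ≠ j → G.Adj (a i) (a j)) ∧
    (∀ i j, i ≠ j → G.Adj (b i) (b j)) ∧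
    (∀ i, (P i).IsPath ∧ 1 ≤ (P i).length) ∧
    (∀ i j, i ≠ j → ∀ w, w ∈ (P i).support → w ∉ (P j).support) ∧
    (∀ u v : V, G.Adj u v → (∃ i, u ∈ (P i).support) → (∃ j, v ∈ (P j).support) →
      (∃ k, ((P k).toSubgraph).Adj u v) ∨
      (∃ i j, i ≠ j ∧ u = a i ∧ v = a j) ∨
      (∃ i j, i ≠ j ∧ u = b i ∧ v = b j))

private lemma endpoints_ne' {V : Type*} {G : SimpleGraph V} {u v : V} (p : G.Walk u v)
    (hp : p.IsPath) (hl : 1 ≤ p.length) : u ≠ v := by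
  cases p with
  | nil => simp at hl
  | cons h q =>
    rintro rfl
    rw [Walk.cons_isPath_iff] at hp
    exact hp.2 q.end_mem_support

private lemma induce_reachable' {V : Type*} {G : SimpleGraph V} {s : Set V} :
    ∀ {u v : V} (p : G.Walk u v), (∀ w ∈ p.support, w ∈ s) →
    ∀ (hu : u ∈ s) (hv : v ∈ s), (G.induce s).Reachable ⟨u, hu⟩ ⟨v, hv⟩ := by
  intro u v p
  induction p with
  | nil => intro _ hu hv; exact Reachable.refl _
  | @cons u w v h q ih =>
    intro hs hu hv
    have hw : w ∈ s := hs w (by simp)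
    have h1 : (G.induce s).Adj ⟨u, hu⟩ ⟨w, hw⟩ := h
    exact h1.reachable.trans (ih (fun x hx => hs x (by simp [hx])) hw hv)

/-- if `G` contains an induced prism, then `G` is not locally
`{P̄₃}`-decomposable: there exist a vertex `v`, vertices `x, y, z` in `N(v)` with
`xy` an edge and `xz`, `yz` non-edges, and a connected component `C` of `G − N[v]`
in which all of `x, y, z` have neighbors. -/
theorem stmt_19 {V : Type*} [Fintype V] (G : SimpleGraph V)
    (h : ContainsPrism G) :
    ∃ v x y z : V, G.Adj v x ∧ G.Adj v y ∧ G.Adj v z ∧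
      G.Adj x y ∧ x ≠ z ∧ y ≠ z ∧ ¬ G.Adj x z ∧ ¬ G.Adj y z ∧
      ∃ C : (G.induce {w : V | ¬ (w = v ∨ G.Adj v w)}).ConnectedComponent,
        (∃ w : {w : V | ¬ (w = v ∨ G.Adj v w)},
          (G.induce {w : V | ¬ (w = v ∨ G.Adj v w)}).connectedComponentMk w = C ∧
          G.Adj x ↑w) ∧
        (∃ w : {w : V | ¬ (w = v ∨ G.Adj v w)},
          (G.induce {w : V | ¬ (w = v ∨ G.Adj v w)}).connectedComponentMk w = C ∧
          G.Adj y ↑w) ∧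
        (∃ w : {w : V | ¬ (w = v ∨ G.Adj v w)},
          (G.induce {w : V | ¬ (w = v ∨ G.Adj v w)}).connectedComponentMk w = C ∧
          G.Adj z ↑w) := by
  obtain ⟨a, b, P, hA, hB, hPa, hdisj, hind⟩ := h
  have hne : ∀ i, a i ≠ b i := fun i => endpoints_ne' (P i) (hPa i).1 (hPa i).2
  obtain ⟨p, hap, q0, hP0⟩ := Walk.exists_eq_cons_of_ne (hne 0) (P 0)
  obtain ⟨p1, hap1, q1, hP1⟩ := Walk.exists_eq_cons_of_ne (hne 1) (P 1)
  obtain ⟨p2, hap2, q2, hP2⟩ := Walk.exists_eq_cons_of_ne (hne 2) (P 2)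
  have haP : ∀ i, a i ∈ (P i).support := fun i => Walk.start_mem_support _
  have hbP : ∀ i, b i ∈ (P i).support := fun i => Walk.end_mem_support _
  have hdisj' : ∀ i j w, w ∈ (P i).support → w ∈ (P j).support → i = j := by
    intro i j w hi hj
    by_contra hc
    exact hdisj i j hc w hi hj
  -- path facts for P 0
  have hP0path : (Walk.cons hap q0).IsPath := hP0 ▸ (hPa 0).1
  rw [Walk.cons_isPath_iff] at hP0path
  have ha0q0 : a 0 ∉ q0.support := hP0path.2
  have hpq0 : p ∈ q0.support := q0.start_mem_support
  have hpP0 : p ∈ (P 0).support := by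
    rw [hP0, Walk.support_cons]; exact List.mem_cons_of_mem _ hpq0
  have hp_ne_a0 : p ≠ a 0 := fun hc => ha0q0 (hc ▸ hpq0)
  -- path facts for P 1, P 2
  have hP1path : (Walk.cons hap1 q1).IsPath := hP1 ▸ (hPa 1).1
  rw [Walk.cons_isPath_iff] at hP1path
  have hP2path : (Walk.cons hap2 q2).IsPath := hP2 ▸ (hPa 2).1
  rw [Walk.cons_isPath_iff] at hP2path
  have hsub : ∀ k u v', (P k).toSubgraph.Adj u v' →
      u ∈ (P k).support ∧ v' ∈ (P k).support := fun k u v' h =>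
    ⟨((P k).mem_verts_toSubgraph).1 h.fst_mem, ((P k).mem_verts_toSubgraph).1 h.snd_mem⟩
  -- the key set membership lemma
  have hS : ∀ (i : Fin 3) w, w ∈ (P i).support → w ≠ a 0 → w ≠ a 1 → w ≠ a 2 →
      (∀ k, ¬ (P k).toSubgraph.Adj (a 0) w) → ¬ (w = a 0 ∨ G.Adj (a 0) w) := by
    intro i w hw h0 h1 h2 hk
    rintro (rfl | hadj)
    · exact h0 rfl
    rcases hind (a 0) w hadj ⟨0, haP 0⟩ ⟨i, hw⟩ with ⟨k, hk'⟩ | ⟨i', j', _, _, hj⟩ |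
      ⟨i', j', _, hbi, _⟩
    · exact hk k hk'
    · fin_cases j' <;> [exact h0 hj; exact h1 hj; exact h2 hj]
    · have h0i : (0 : Fin 3) = i' := hdisj' 0 i' (a 0) (haP 0) (by rw [hbi]; exact hbP i')
      exact hne 0 (by rw [← h0i] at hbi; exact hbi)
  have hnotsub12 : ∀ (i : Fin 3), i ≠ 0 → ∀ w, w ∈ (P i).support →
      ∀ k, ¬ (P k).toSubgraph.Adj (a 0) w := by
    intro i hi w hw k hk
    obtain ⟨h1, h2⟩ := hsub k _ _ hk
    have hk0 : k = 0 := hdisj' k 0 (a 0) h1 (haP 0)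
    subst hk0
    exact hi (hdisj' i 0 w hw h2)
  have hnotsub0 : ∀ w, w ∈ (P 0).support → w ≠ p → w ≠ a 0 →
      ∀ k, ¬ (P k).toSubgraph.Adj (a 0) w := by
    intro w hw hp0 hwa0 k hk
    obtain ⟨h1, h2⟩ := hsub k _ _ hk
    have hk0 : k = 0 := hdisj' k 0 (a 0) h1 (haP 0)
    subst hk0
    rw [hP0] at hk
    simp only [Walk.toSubgraph, Subgraph.sup_adj, subgraphOfAdj_adj, Sym2.eq, Sym2.rel_iff',
      Prod.mk.injEq, Prod.swap_prod_mk] at hk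
    rcases hk with (h' | h') | hq
    · exact hp0 h'.2.symm
    · exact hp_ne_a0 h'.2
    · exact ha0q0 ((q0.mem_verts_toSubgraph).1 hq.fst_mem)
  have cross_ne : ∀ (i j : Fin 3) w, i ≠ j → w ∈ (P i).support → w ≠ a j := by
    intro i j w hij hw hc
    exact hij (hdisj' i j w hw (hc ▸ haP j))
  have hmem1 : ∀ w, w ∈ (P 1).support → w ≠ a 1 → ¬ (w = a 0 ∨ G.Adj (a 0) w) := by
    intro w hw h1
    exact hS 1 w hw (cross_ne 1 0 w (by decide) hw) h1 (cross_ne 1 2 w (by decide) hw)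
      (hnotsub12 1 (by decide) w hw)
  have hmem2 : ∀ w, w ∈ (P 2).support → w ≠ a 2 → ¬ (w = a 0 ∨ G.Adj (a 0) w) := by
    intro w hw h2
    exact hS 2 w hw (cross_ne 2 0 w (by decide) hw) (cross_ne 2 1 w (by decide) hw) h2
      (hnotsub12 2 (by decide) w hw)
  have hmem0 : ∀ w, w ∈ (P 0).support → w ≠ a 0 → w ≠ p → ¬ (w = a 0 ∨ G.Adj (a 0) w) := by
    intro w hw h0 hp0
    exact hS 0 w hw h0 (cross_ne 0 1 w (by decide) hw) (cross_ne 0 2 w (by decide) hw)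
      (hnotsub0 w hw hp0 h0)
  -- non-adjacency of a 1, a 2 with p
  have hnadj : ∀ i : Fin 3, i ≠ 0 → ¬ G.Adj (a i) p := by
    intro i hi hadj
    rcases hind (a i) p hadj ⟨i, haP i⟩ ⟨0, hpP0⟩ with ⟨k, hk⟩ | ⟨i', j', _, _, hj⟩ |
      ⟨i', j', _, hbi, _⟩
    · obtain ⟨h1, h2⟩ := hsub k _ _ hk
      have hk0 : k = 0 := hdisj' k 0 p h2 hpP0
      subst hk0
      exact hi (hdisj' i 0 (a i) (haP i) h1)
    · have h0j : (0 : Fin 3) = j' := hdisj' 0 j' p hpP0 (by rw [hj]; exact haP j')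
      exact hp_ne_a0 (by rw [← h0j] at hj; exact hj)
    · have hii : i = i' := hdisj' i i' (a i) (haP i) (by rw [hbi]; exact hbP i')
      exact hne i (by rw [← hii] at hbi; exact hbi)
  have hpa1 : a 1 ≠ p := fun hc => cross_ne 0 1 p (by decide) hpP0 hc.symm
  have hpa2 : a 2 ≠ p := fun hc => cross_ne 0 2 p (by decide) hpP0 hc.symm
  refine ⟨a 0, a 1, a 2, p, hA 0 1 (by decide), hA 0 2 (by decide), hap, hA 1 2 (by decide),
    hpa1, hpa2, hnadj 1 (by decide), hnadj 2 (by decide), ?_⟩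
  have hb1S : b 1 ∈ {w : V | ¬ (w = a 0 ∨ G.Adj (a 0) w)} := hmem1 (b 1) (hbP 1) (hne 1).symm
  refine ⟨(G.induce _).connectedComponentMk ⟨b 1, hb1S⟩, ?_, ?_, ?_⟩
  · -- x = a 1
    have hq1sub : ∀ w ∈ q1.support, w ∈ (P 1).support := fun w hw => by
      rw [hP1, Walk.support_cons]; exact List.mem_cons_of_mem _ hw
    have hq1S : ∀ w ∈ q1.support, w ∈ {w : V | ¬ (w = a 0 ∨ G.Adj (a 0) w)} := fun w hw =>
      hmem1 w (hq1sub w hw) (fun hc => hP1path.2 (hc ▸ hw))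
    have hp1S := hq1S p1 q1.start_mem_support
    exact ⟨⟨p1, hp1S⟩, ConnectedComponent.sound (induce_reachable' q1 hq1S hp1S hb1S), hap1⟩
  · -- y = a 2
    have hq2sub : ∀ w ∈ q2.support, w ∈ (P 2).support := fun w hw => by
      rw [hP2, Walk.support_cons]; exact List.mem_cons_of_mem _ hw
    have hq2S : ∀ w ∈ q2.support, w ∈ {w : V | ¬ (w = a 0 ∨ G.Adj (a 0) w)} := fun w hw =>
      hmem2 w (hq2sub w hw) (fun hc => hP2path.2 (hc ▸ hw))
    have hp2S := hq2S p2 q2.start_mem_support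
    have hb2S := hq2S (b 2) q2.end_mem_support
    have e : (G.induce {w : V | ¬ (w = a 0 ∨ G.Adj (a 0) w)}).Adj ⟨b 2, hb2S⟩ ⟨b 1, hb1S⟩ :=
      hB 2 1 (by decide)
    exact ⟨⟨p2, hp2S⟩, ConnectedComponent.sound
      ((induce_reachable' q2 hq2S hp2S hb2S).trans e.reachable), hap2⟩
  · -- z = p
    rcases eq_or_ne p (b 0) with hpb | hpb
    · exact ⟨⟨b 1, hb1S⟩, rfl, by rw [hpb]; exact hB 0 1 (by decide)⟩
    · obtain ⟨q, hpq, q0', hq0⟩ := Walk.exists_eq_cons_of_ne hpb q0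
      have hq0path : (Walk.cons hpq q0').IsPath := hq0 ▸ hP0path.1
      rw [Walk.cons_isPath_iff] at hq0path
      have hq0'sub : ∀ w ∈ q0'.support, w ∈ (P 0).support := fun w hw => by
        rw [hP0, Walk.support_cons, hq0, Walk.support_cons]
        exact List.mem_cons_of_mem _ (List.mem_cons_of_mem _ hw)
      have hq0'S : ∀ w ∈ q0'.support, w ∈ {w : V | ¬ (w = a 0 ∨ G.Adj (a 0) w)} := by
        intro w hw
        refine hmem0 w (hq0'sub w hw) (fun hc => ha0q0 ?_) (fun hc => hq0path.2 (hc ▸ hw))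
        rw [hq0, Walk.support_cons]
        exact List.mem_cons_of_mem _ (hc ▸ hw)
      have hqS := hq0'S q q0'.start_mem_support
      have hb0S := hq0'S (b 0) q0'.end_mem_support
      have e : (G.induce {w : V | ¬ (w = a 0 ∨ G.Adj (a 0) w)}).Adj ⟨b 0, hb0S⟩ ⟨b 1, hb1S⟩ :=
        hB 0 1 (by decide)
      exact ⟨⟨q, hqS⟩, ConnectedComponent.sound
        ((induce_reachable' q0' hq0'S hqS hb0S).trans e.reachable), hpq⟩
end
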